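/- Let A be a unital associative algebra over a field k and r, s ∈ k. The linear map R(a⊗b) = s·ab⊗1 + r·1⊗ab − s·a⊗b on A⊗A satisfies the braid equation R₁₂∘R₂₃∘R₁₂ = R₂₃∘R₁₂∘R₂₃ on A⊗A⊗A. -/
import Mathlib


open TensorProduct LinearMap

/-- For a unital associative `k`-algebra `A` and scalars `r, s`, the map
`R(a⊗b) = s·ab⊗1 + r·1⊗ab − s·a⊗b` on `A ⊗ A` satisfies the braid equation
`R₁₂ ∘ R₂₃ ∘ R₁₂ = R₂₃ ∘ R₁₂ ∘ R₂₃` on `A ⊗ A ⊗ A`. -/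
theorem stmt1 (k A : Type*) [Field k] [Ring A] [Algebra k A]
    (r s : k)
    (R : A ⊗[k] A →ₗ[k] A ⊗[k] A)
    (hR : ∀ a b : A, R (a ⊗ₜ[k] b) =
      s • ((a * b) ⊗ₜ[k] (1 : A)) + r • ((1 : A) ⊗ₜ[k] (a * b)) - s • (a ⊗ₜ[k] b))
    (R12 : A ⊗[k] (A ⊗[k] A) →ₗ[k] A ⊗[k] (A ⊗[k] A))
    -- `R12` acts as `R` on the first two tensor factors:
    (hR12 : ∀ a b c : A, R12 (a ⊗ₜ[k] (b ⊗ₜ[k] c)) =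
      ((TensorProduct.mk k A A).flip c).lTensor A (R (a ⊗ₜ[k] b)))
    -- `R23 = id ⊗ R` acts on the last two tensor factors:
    (R23 : A ⊗[k] (A ⊗[k] A) →ₗ[k] A ⊗[k] (A ⊗[k] A))
    (hR23 : R23 = R.lTensor A) :
    R12 ∘ₗ R23 ∘ₗ R12 = R23 ∘ₗ R12 ∘ₗ R23 := by
  subst hR23
  ext a b c
  simp only [compl₁₂_apply, coe_comp, Function.comp_apply, AlgebraTensorModule.curry_apply,
    curry_apply, coe_restrictScalars, hR12, hR, lTensor_tmul, map_sub, map_add, map_smul,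
    TensorProduct.mk_apply, flip_apply, tmul_add, tmul_sub, add_tmul, sub_tmul, tmul_smul,
    ← smul_tmul', mul_smul_comm, smul_mul_assoc, one_mul, mul_one, mul_assoc, smul_smul]
  module
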